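/- arXiv:1606.08383 — 2 statements merged into one kernel-verified Lean document; each statement's English description precedes it below -/
import Mathlib

section
/- Bridge perturbation lemma: let b ∈ ℤ, t ∈ ℂ, and suppose there exist c, d ∈ ℤ with π(c) = b, π(d) = b+1 and d < c ≤ b. Let Â be the k×n matrix (columns extended periodically) with Â_a = A_a for all a ≢ b (mod n) and Â_b = A_b + t·A_{b+1}. Then Â has rank k, and for every a ∈ ℤ the difference τ→(Â)_a − τ→(A)_a lies in span{ τ→(A)_p : p ∈ ℤ, a ⇒_π p }. -/
open scoped BigOperators

/-- The columns of `A` are `n`-periodic. -/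
def ColPeriodic (k n : ℕ) (A : ℤ → Fin k → ℂ) : Prop :=
  ∀ a : ℤ, A (a + (n : ℤ)) = A a

/-- `A` has rank `k`, i.e. its columns span `ℂ^k`. -/
def FullRank (k : ℕ) (A : ℤ → Fin k → ℂ) : Prop :=
  Submodule.span ℂ (Set.range A) = ⊤

/-- The Gale (componentwise) partial order on finite subsets of `ℤ` of equal
cardinality: `B ≼ C` iff they have the same cardinality and, for each `i`, the
`i`-th smallest element of `B` is at most the `i`-th smallest element of `C`
(equivalently, the counting condition below). -/
def galeLE (B C : Finset ℤ) : Prop :=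
  B.card = C.card ∧
    ∀ t : ℤ, (B.filter fun x => t ≤ x).card ≤ (C.filter fun x => t ≤ x).card

/-- The columns of `A` indexed by `J` form a basis of `ℂ^k`. -/
def IsColBasis (k : ℕ) (A : ℤ → Fin k → ℂ) (J : Finset ℤ) : Prop :=
  J.card = k ∧ LinearIndependent ℂ (fun j : (J : Set ℤ) => A (j : ℤ)) ∧
    Submodule.span ℂ (A '' (J : Set ℤ)) = ⊤

/-- `I` is the `≼_a`-minimal `k`-element subset of `{a, a+1, …, a+n-1}` whose
columns form a basis of `ℂ^k` (the `a`-minimal basis `I→_a`). -/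
def IsMinBasis (k n : ℕ) (A : ℤ → Fin k → ℂ) (a : ℤ) (I : Finset ℤ) : Prop :=
  I ⊆ Finset.Ico a (a + (n : ℤ)) ∧ IsColBasis k A I ∧
    ∀ J : Finset ℤ, J ⊆ Finset.Ico a (a + (n : ℤ)) → IsColBasis k A J → galeLE I J

/-- `I` is the `≼_{a+1}`-maximal `k`-element subset of `{a-n+1, …, a}` whose
columns form a basis of `ℂ^k` (the `a`-maximal basis `I←_a`).  Note that on
representatives in `{a-n+1, …, a}` the cyclic order `≺_{a+1}` agrees with the
usual order of `ℤ`. -/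
def IsMaxBasis (k n : ℕ) (A : ℤ → Fin k → ℂ) (a : ℤ) (I : Finset ℤ) : Prop :=
  I ⊆ Finset.Ioc (a - (n : ℤ)) a ∧ IsColBasis k A I ∧
    ∀ J : Finset ℤ, J ⊆ Finset.Ioc (a - (n : ℤ)) a → IsColBasis k A J → galeLE J I

/-- The standard symmetric bilinear form `⟨x|y⟩ = ∑ i, x i * y i` on `ℂ^k`. -/
noncomputable def bil (k : ℕ) (x y : Fin k → ℂ) : ℂ := ∑ i, x i * y i

/-- `π` is the bounded affine permutation of `A`:
`π a` is the least `r` with `a ≤ r ≤ a + n` and `A a ∈ span(A (a+1), …, A r)`. -/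
def IsBAP (k n : ℕ) (A : ℤ → Fin k → ℂ) (π : ℤ → ℤ) : Prop :=
  ∀ a : ℤ,
    a ≤ π a ∧ π a ≤ a + (n : ℤ) ∧
    A a ∈ Submodule.span ℂ (A '' Set.Ioc a (π a)) ∧
    ∀ r : ℤ, a ≤ r → r ≤ a + (n : ℤ) →
      A a ∈ Submodule.span ℂ (A '' Set.Ioc a r) → π a ≤ r

/-- `T` is the right twist `τ→(A)`: for each `a`, the column `T a` pairs to `1`
with `A a` and to `0` with the other columns of the `a`-minimal basis. -/
def IsRightTwist (k n : ℕ) (A T : ℤ → Fin k → ℂ) : Prop :=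
  ∀ (a : ℤ) (I : Finset ℤ), IsMinBasis k n A a I →
    ∀ b ∈ I, bil k (T a) (A b) = if b = a then 1 else 0

/-- `T` is the left twist `τ←(A)`: for each `a`, the column `T a` pairs to `1`
with `A a` and to `0` with the other columns of the `a`-maximal basis. -/
def IsLeftTwist (k n : ℕ) (A T : ℤ → Fin k → ℂ) : Prop :=
  ∀ (a : ℤ) (I : Finset ℤ), IsMaxBasis k n A a I →
    ∀ b ∈ I, bil k (T a) (A b) = if b = a then 1 else 0

/-- `Δ_I(A)`, where `I = {i 0 < i 1 < ⋯ < i (k-1)}` is given by a strictly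
monotone enumeration `i : Fin k → ℤ`: the determinant of the `k×k` matrix with
columns `A (i 0), …, A (i (k-1))`. -/
noncomputable def Delta (k : ℕ) (A : ℤ → Fin k → ℂ) (i : Fin k → ℤ) : ℂ :=
  Matrix.det (Matrix.of fun r s : Fin k => A (i s) r)


/-!
Within the window `[a, a + n)` the `a`-minimal basis is the greedy basis (the columns outside the
span of the earlier ones), and `τ→(A)_a` is the dual vector of `A_a` with respect to it.  For a
window containing `b`, the perturbation changes neither the spans of the initial segments other
than `A_a, …, A_b` nor the columns other than `A_b`, so the greedy bases of `A` and `Â` can only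
differ at `b` and `b + 1`.  The bridge `d < c ≤ b` leaves two possibilities: the greedy basis of
`A` is contained in that of `Â` (and then `τ→(Â)_a = τ→(A)_a`), or `b + 1` is traded for `b`.  In
the second case `τ→(Â)_a − τ→(A)_a` is a multiple of the dual vector of `A_{b+1}`; moving the window
to the left one step at a time writes that dual vector through twists `τ→(A)_q` with `q < a` and
`π q ≥ b + 1`, and `π a ≤ b` unless the multiple vanishes.  By periodicity every `a` lies in a
window containing a translate of `b`.
-/

open Set Submodule Module

theorem Finset.subset_of_sdiff_eq_of_card_le {α : Type*} [DecidableEq α] {s t u : Finset α}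
    (hu : u ⊆ s) (h : s \ u = t \ u) (hc : s.card ≤ t.card) : u ⊆ t := by
  have hs := card_sdiff_add_card_eq_card hu
  have ht := card_sdiff_add_card_inter t u
  rw [h] at hs
  have : t ∩ u = u := eq_of_subset_of_card_le inter_subset_right (by omega)
  exact this ▸ inter_subset_left

theorem intCast_ne_of_mem_Ico {n : ℕ} {a i j : ℤ} (hi : i ∈ Ico a (a + n))
    (hj : j ∈ Ico a (a + n)) (hij : i ≠ j) : (i : ZMod n) ≠ j := by
  rw [Ne, ZMod.intCast_eq_intCast_iff_dvd_sub]
  intro hdvd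
  have := Int.eq_zero_of_abs_lt_dvd hdvd
    (abs_lt.2 ⟨by linarith [hi.2, hj.1], by linarith [hi.1, hj.2]⟩)
  omega

section GreedyBasis

variable {K V : Type*} [DivisionRing K] [AddCommGroup V] [Module K V] {n : ℕ} {A : ℤ → V} {a : ℤ}

theorem span_image_Ico_eq_top (hper : Function.Periodic A n) (hspan : span K (range A) = ⊤)
    (hn : 0 < n) (a : ℤ) : span K (A '' Ico a (a + n)) = ⊤ := by
  rw [eq_top_iff, ← hspan, span_le]
  rintro _ ⟨y, rfl⟩
  have h₁ := Int.emod_nonneg (y - a) (by omega : (n : ℤ) ≠ 0)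
  have h₂ := Int.emod_lt_of_pos (y - a) (by omega : (0 : ℤ) < n)
  have h₃ := Int.emod_add_mul_ediv (y - a) n
  rw [← show A (y - (y - a) / n * n) = A y by simpa using hper.sub_int_mul_eq ((y - a) / n)]
  exact subset_span ⟨_, ⟨by linarith, by linarith⟩, rfl⟩

variable (K) in
open Classical in
noncomputable def greedyBasis (n : ℕ) (A : ℤ → V) (a : ℤ) : Finset ℤ :=
  (Finset.Ico a (a + n)).filter fun j => A j ∉ span K (A '' Ico a j)

theorem mem_greedyBasis {j : ℤ} :
    j ∈ greedyBasis K n A a ↔ j ∈ Ico a (a + n) ∧ A j ∉ span K (A '' Ico a j) := by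
  simp [greedyBasis]

theorem greedyBasis_congr {A' : ℤ → V} (h : EqOn A A' (Ico a (a + n))) :
    greedyBasis K n A a = greedyBasis K n A' a := by
  ext j
  simp only [mem_greedyBasis]
  refine and_congr_right fun hj => ?_
  have hsub : Ico a j ⊆ Ico a (a + n) := Ico_subset_Ico_right hj.2.le
  rw [h hj, image_congr (h.mono hsub)]

theorem mem_greedyBasis_add_one {j : ℤ} (hj : j ∈ greedyBasis K n A a) (hja : j ≠ a) :
    j ∈ greedyBasis K n A (a + 1) := by
  obtain ⟨⟨h₁, h₂⟩, hnot⟩ := mem_greedyBasis.1 hj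
  refine mem_greedyBasis.2 ⟨⟨by omega, by omega⟩, fun hmem => hnot ?_⟩
  exact span_mono (image_mono (Ico_subset_Ico_left (by omega))) hmem

theorem linearIndepOn_greedyBasis : LinearIndepOn K A (greedyBasis K n A a : Set ℤ) := by
  suffices ∀ s : Finset ℤ, s ⊆ greedyBasis K n A a → LinearIndepOn K A (s : Set ℤ) from
    this _ subset_rfl
  intro s
  induction s using Finset.induction_on_max with
  | empty => simp
  | insert j s hlt ih =>
    intro hs
    rw [Finset.insert_subset_iff] at hs
    rw [Finset.coe_insert]
    refine (ih hs.2).insert fun hj => (mem_greedyBasis.1 hs.1).2 (span_mono (image_mono ?_) hj)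
    exact fun i hi => ⟨(mem_greedyBasis.1 (hs.2 hi)).1.1, hlt i hi⟩

theorem span_greedyBasis_filter_lt {r : ℤ} (har : a ≤ r) (hr : r ≤ a + n) :
    span K (A '' ((greedyBasis K n A a).filter (· < r) : Set ℤ)) = span K (A '' Ico a r) := by
  induction r, har using Int.leInduction with
  | base =>
    rw [Finset.filter_false_of_mem fun j hj => not_lt.2 (mem_greedyBasis.1 hj).1.1]
    simp
  | succ r har ih =>
    rw [← insert_Ico_right_eq_Ico_add_one har, image_insert_eq, span_insert, ← ih (by omega)]
    by_cases hrG : r ∈ greedyBasis K n A a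
    · have : (greedyBasis K n A a).filter (· < r + 1) =
          insert r ((greedyBasis K n A a).filter (· < r)) := by
        ext j
        by_cases hj : j = r <;> simp [hj, hrG]
        omega
      rw [this, Finset.coe_insert, image_insert_eq, span_insert]
    · have : (greedyBasis K n A a).filter (· < r + 1) = (greedyBasis K n A a).filter (· < r) := by
        ext j
        by_cases hj : j = r <;> simp [hj, hrG]
        omega
      rw [this, right_eq_sup, span_singleton_le_iff_mem, ih (by omega)]
      by_contra hnot
      exact hrG (mem_greedyBasis.2 ⟨⟨har, by omega⟩, hnot⟩)

theorem span_image_greedyBasis :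
    span K (A '' greedyBasis K n A a) = span K (A '' Ico a (a + n)) := by
  rw [← span_greedyBasis_filter_lt (by omega) le_rfl,
    Finset.filter_true_of_mem fun j hj => (mem_greedyBasis.1 hj).1.2]

theorem finrank_span_image_eq_card {s : Finset ℤ} (hs : LinearIndepOn K A (s : Set ℤ)) :
    finrank K (span K (A '' s)) = s.card := by
  rw [image_eq_range, finrank_span_eq_card hs]
  simp

theorem card_greedyBasis :
    (greedyBasis K n A a).card = finrank K (span K (A '' Ico a (a + n))) := by
  rw [← span_image_greedyBasis, finrank_span_image_eq_card linearIndepOn_greedyBasis]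

/-- An independent `J` has at most as many elements below `s` as the greedy basis, because those
of the greedy basis span everything before `s`. -/
theorem galeLE_greedyBasis {J : Finset ℤ} (hJ : J ⊆ Finset.Ico a (a + n))
    (hJind : LinearIndepOn K A (J : Set ℤ)) (hcard : J.card = (greedyBasis K n A a).card) :
    galeLE (greedyBasis K n A a) J := by
  set G := greedyBasis K n A a
  have hlt : ∀ s, (J.filter (· < s)).card ≤ (G.filter (· < s)).card := by
    intro s
    obtain ⟨r, hr⟩ : ∃ r, r = max a (min s (a + n)) := ⟨_, rfl⟩
    have := FiniteDimensional.span_of_finite K ((finite_Ico a r).image A)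
    calc (J.filter (· < s)).card = finrank K (span K (A '' (J.filter (· < s)))) :=
          (finrank_span_image_eq_card
            (hJind.mono (Finset.coe_subset.2 (Finset.filter_subset _ _)))).symm
      _ ≤ finrank K (span K (A '' Ico a r)) := by
          refine Submodule.finrank_mono (span_mono (image_mono fun j hj => ?_))
          simp only [Finset.coe_filter, mem_ofPred_eq] at hj
          have := Finset.mem_Ico.1 (hJ hj.1)
          exact ⟨this.1, by omega⟩
      _ = (G.filter (· < r)).card := by
          rw [← span_greedyBasis_filter_lt (n := n) (by omega) (by omega),
            finrank_span_image_eq_card (linearIndepOn_greedyBasis.mono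
              (Finset.coe_subset.2 (Finset.filter_subset _ _)))]
      _ ≤ (G.filter (· < s)).card := by
          refine Finset.card_le_card fun j hj => ?_
          simp only [Finset.mem_filter] at hj ⊢
          have := (mem_greedyBasis.1 hj.1).1.1
          exact ⟨hj.1, by omega⟩
  refine ⟨hcard.symm, fun s => ?_⟩
  have hJs := Finset.card_filter_add_card_filter_not (s := J) (fun x => s ≤ x)
  have hGs := Finset.card_filter_add_card_filter_not (s := G) (fun x => s ≤ x)
  simp only [not_le] at hJs hGs
  have := hlt s
  omega

end GreedyBasis

section Twist

variable {k n : ℕ} {A T : ℤ → Fin k → ℂ} {a m : ℤ}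

theorem bil_add_right (v x y : Fin k → ℂ) : bil k v (x + y) = bil k v x + bil k v y :=
  dotProduct_add v x y

theorem bil_smul_right (c : ℂ) (v x : Fin k → ℂ) : bil k v (c • x) = c * bil k v x :=
  dotProduct_smul c v x

theorem bil_sub_left (v w x : Fin k → ℂ) : bil k (v - w) x = bil k v x - bil k w x :=
  sub_dotProduct v w x

theorem bil_smul_left (c : ℂ) (v x : Fin k → ℂ) : bil k (c • v) x = c * bil k v x :=
  smul_dotProduct c v x

theorem bil_eq_zero_of_mem_span {v : Fin k → ℂ} {s : Set (Fin k → ℂ)}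
    (h : ∀ w ∈ s, bil k v w = 0) {x : Fin k → ℂ} (hx : x ∈ span ℂ s) : bil k v x = 0 := by
  induction hx using Submodule.span_induction with
  | mem w hw => exact h w hw
  | zero => exact dotProduct_zero v
  | add x y _ _ hx hy => rw [bil_add_right, hx, hy, add_zero]
  | smul c x _ hx => rw [bil_smul_right, hx, mul_zero]

theorem eq_zero_of_bil_eq_zero {s : Set (Fin k → ℂ)} (hs : span ℂ s = ⊤) {u : Fin k → ℂ}
    (h : ∀ w ∈ s, bil k u w = 0) : u = 0 :=
  dotProduct_eq_zero_iff.1 fun _ => bil_eq_zero_of_mem_span h (hs ▸ mem_top)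

theorem eq_of_bil_eq {s : Set (Fin k → ℂ)} (hs : span ℂ s = ⊤) {u v : Fin k → ℂ}
    (h : ∀ w ∈ s, bil k u w = bil k v w) : u = v :=
  sub_eq_zero.1 (eq_zero_of_bil_eq_zero hs fun w hw => by rw [bil_sub_left, h w hw, sub_self])

def IsDualVector (A : ℤ → Fin k → ℂ) (J : Finset ℤ) (m : ℤ) (u : Fin k → ℂ) : Prop :=
  ∀ j ∈ J, bil k u (A j) = if j = m then 1 else 0

theorem IsDualVector.eq {J : Finset ℤ} (hJ : span ℂ (A '' J) = ⊤) {u v : Fin k → ℂ}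
    (hu : IsDualVector A J m u) (hv : IsDualVector A J m v) : u = v := by
  refine eq_of_bil_eq hJ ?_
  rintro _ ⟨j, hj, rfl⟩
  rw [hu j hj, hv j hj]

theorem IsDualVector.eq_zero {J : Finset ℤ} (hJ : span ℂ (A '' J) = ⊤) {u : Fin k → ℂ}
    (hu : IsDualVector A J m u) (hm : m ∉ J) : u = 0 :=
  hu.eq hJ fun j hj => by rw [if_neg (ne_of_mem_of_not_mem hj hm)]; exact zero_dotProduct _

theorem isMinBasis_greedyBasis (hA : span ℂ (A '' Ico a (a + n)) = ⊤) :
    IsMinBasis k n A a (greedyBasis ℂ n A a) := by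
  have hcard : (greedyBasis ℂ n A a).card = k := by
    rw [card_greedyBasis, hA, finrank_top, finrank_fin_fun]
  refine ⟨fun j hj => Finset.mem_Ico.2 (mem_greedyBasis.1 hj).1,
    ⟨hcard, linearIndepOn_greedyBasis, by rw [span_image_greedyBasis, hA]⟩,
    fun J hJ hJb => galeLE_greedyBasis hJ hJb.2.1 (hJb.1.trans hcard.symm)⟩

theorem IsRightTwist.isDualVector (hT : IsRightTwist k n A T)
    (hA : span ℂ (A '' Ico a (a + n)) = ⊤) : IsDualVector A (greedyBasis ℂ n A a) a (T a) :=
  hT a _ (isMinBasis_greedyBasis hA)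

theorem IsRightTwist.eq_of_isDualVector (hT : IsRightTwist k n A T)
    (hA : span ℂ (A '' Ico a (a + n)) = ⊤) {v : Fin k → ℂ}
    (hv : IsDualVector A (greedyBasis ℂ n A a) a v) : v = T a :=
  hv.eq (span_image_greedyBasis.trans hA) (hT.isDualVector hA)

theorem IsRightTwist.eq_of_eqOn {A' T' : ℤ → Fin k → ℂ} (hT : IsRightTwist k n A T)
    (hT' : IsRightTwist k n A' T') (hA : span ℂ (A '' Ico a (a + n)) = ⊤)
    (hA' : span ℂ (A' '' Ico a (a + n)) = ⊤) (h : EqOn A A' (Ico a (a + n))) : T a = T' a := by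
  refine hT'.eq_of_isDualVector hA' fun j hj => ?_
  rw [← greedyBasis_congr h] at hj
  rw [← h (mem_greedyBasis.1 hj).1]
  exact hT.isDualVector hA j hj

end Twist

section BoundedAffinePermutation

variable {k n : ℕ} {A : ℤ → Fin k → ℂ} {π : ℤ → ℤ}

theorem IsBAP.mem_span_Ico (hπ : IsBAP k n A π) (a : ℤ) :
    A a ∈ span ℂ (A '' Ico (a + 1) (π a + 1)) := by
  rw [Ico_add_one_add_one_eq_Ioc]
  exact (hπ a).2.2.1

theorem IsBAP.notMem_span_Ico (hπ : IsBAP k n A π) {a r : ℤ} (har : a < r) (hr : r ≤ π a) :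
    A a ∉ span ℂ (A '' Ico (a + 1) r) := by
  intro h
  have := (hπ a).2.2.2 (r - 1) (by omega) (by linarith [(hπ a).2.1])
    (by rwa [← Ico_add_one_add_one_eq_Ioc, sub_add_cancel])
  omega

theorem IsBAP.apply_mem_span (hπ : IsBAP k n A π) (a : ℤ) :
    A (π a) ∈ span ℂ (A '' Ico a (π a)) := by
  rcases (hπ a).1.eq_or_lt with h | h
  · have := hπ.mem_span_Ico a
    rw [← h, Ico_self, image_empty, span_empty, mem_bot] at this
    rw [← h, this]
    exact zero_mem _
  · have hmem := hπ.mem_span_Ico a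
    rw [← insert_Ico_right_eq_Ico_add_one (by omega), image_insert_eq] at hmem
    rw [← insert_Ico_add_one_left_eq_Ico h, image_insert_eq]
    exact mem_span_insert_exchange hmem (hπ.notMem_span_Ico h le_rfl)

theorem IsBAP.apply_notMem_span (hπ : IsBAP k n A π) {a : ℤ} (h : a < π a) :
    A (π a) ∉ span ℂ (A '' Ico (a + 1) (π a)) := by
  intro hp
  apply hπ.notMem_span_Ico h le_rfl
  have := hπ.mem_span_Ico a
  rwa [← insert_Ico_right_eq_Ico_add_one (by omega), image_insert_eq,
    span_insert_eq_span hp] at this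

theorem IsBAP.mem_span_of_mem_span_insert (hπ : IsBAP k n A π) {a x : ℤ} {s : Set ℤ}
    (hax : a < x) (hxπ : x < π a) (hs : s ⊆ Ioo a x)
    (h : A x ∈ span ℂ (insert (A a) (A '' s))) : A x ∈ span ℂ (A '' s) := by
  by_contra hx
  apply hπ.notMem_span_Ico (r := x + 1) (by omega) hxπ
  refine span_le.2 ?_ (mem_span_insert_exchange h hx)
  refine insert_subset_iff.2 ⟨subset_span ⟨x, ⟨by omega, by omega⟩, rfl⟩, ?_⟩
  rintro _ ⟨j, hj, rfl⟩
  have := hs hj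
  exact subset_span ⟨j, ⟨by linarith [this.1], by linarith [this.2]⟩, rfl⟩

theorem IsBAP.apply_add_period (hper : ColPeriodic k n A) (hπ : IsBAP k n A π) (a : ℤ) :
    π (a + n) = π a + n := by
  have himage : ∀ x r : ℤ, A '' Ioc (x + n) (r + n) = A '' Ioc x r := fun x r => by
    rw [← image_add_const_Ioc, image_image]
    exact image_congr fun y _ => hper y
  apply le_antisymm
  · apply (hπ (a + n)).2.2.2 _ (by linarith [(hπ a).1]) (by linarith [(hπ a).2.1])
    rw [himage, hper]
    exact (hπ a).2.2.1
  · have := (hπ a).2.2.2 (π (a + n) - n) (by linarith [(hπ (a + n)).1])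
      (by linarith [(hπ (a + n)).2.1])
      (by rw [← himage, sub_add_cancel, ← hper a]; exact (hπ (a + n)).2.2.1)
    linarith

theorem IsBAP.apply_sub_int_mul (hper : ColPeriodic k n A) (hπ : IsBAP k n A π) (a s : ℤ) :
    π (a - s * n) = π a - s * n := by
  have hper' : Function.Periodic (fun x => π x - x) n := fun x => by
    simp only [hπ.apply_add_period hper]
    ring
  have := hper'.sub_int_mul_eq (x := a) s
  simp only [Int.cast_id] at this
  linarith

end BoundedAffinePermutation

section DualVector

variable {k n : ℕ} {A T : ℤ → Fin k → ℂ} {π : ℤ → ℤ} {a m : ℤ} {u : Fin k → ℂ}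

theorem IsRightTwist.isDualVector_sub_smul (hT : IsRightTwist k n A T)
    (hA : span ℂ (A '' Ico a (a + n)) = ⊤) (ham : a ≠ m)
    (hu : IsDualVector A (greedyBasis ℂ n A (a + 1)) m u) :
    IsDualVector A (greedyBasis ℂ n A a) m (u - bil k u (A a) • T a) := fun j hj => by
  rw [bil_sub_left, bil_smul_left, hT.isDualVector hA j hj]
  by_cases hja : j = a
  · rw [hja, if_pos rfl, if_neg ham, mul_one, sub_self]
  · rw [hu j (mem_greedyBasis_add_one hj hja), if_neg hja, mul_zero, sub_zero]

theorem IsDualVector.bil_eq_zero_of_lt (hπ : IsBAP k n A π)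
    (hu : IsDualVector A (greedyBasis ℂ n A (a + 1)) m u) (hm : π a < m) :
    bil k u (A a) = 0 := by
  have := hπ.mem_span_Ico a
  rw [← span_greedyBasis_filter_lt (n := n) (by linarith [(hπ a).1])
    (by linarith [(hπ a).2.1])] at this
  refine bil_eq_zero_of_mem_span ?_ this
  rintro _ ⟨j, hj, rfl⟩
  simp only [Finset.coe_filter, mem_ofPred_eq] at hj
  rw [hu j hj.1, if_neg (by omega)]

theorem IsRightTwist.mem_span_of_isDualVector (hT : IsRightTwist k n A T)
    (hA : ∀ x, span ℂ (A '' Ico x (x + n)) = ⊤) (hπ : IsBAP k n A π) (ham : a < m)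
    (hu : IsDualVector A (greedyBasis ℂ n A a) m u) :
    u ∈ span ℂ (T '' {q | q < a ∧ m ≤ π q}) := by
  have hzero : ∀ x ≤ m - n, ∀ u, IsDualVector A (greedyBasis ℂ n A x) m u → u = 0 :=
    fun x hx u hu => hu.eq_zero (span_image_greedyBasis.trans (hA x)) fun hm => by
      have := (mem_greedyBasis.1 hm).1.2
      omega
  obtain hle | hle := lt_or_ge a (m - n)
  · rw [hzero a hle.le u hu]
    exact zero_mem _
  induction a, hle using Int.leInduction generalizing u with
  | base =>
    rw [hzero _ le_rfl u hu]
    exact zero_mem _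
  | succ a ha ih =>
    have hmono : {q | q < a ∧ m ≤ π q} ⊆ {q | q < a + 1 ∧ m ≤ π q} :=
      fun q hq => ⟨by linarith [hq.1], hq.2⟩
    rw [← sub_add_cancel u (bil k u (A a) • T a)]
    refine add_mem (span_mono (image_mono hmono)
      (ih (by omega) (hT.isDualVector_sub_smul (hA a) (by omega) hu))) ?_
    by_cases hm : m ≤ π a
    · exact smul_mem _ _ (subset_span ⟨a, ⟨by omega, hm⟩, rfl⟩)
    · rw [hu.bil_eq_zero_of_lt hπ (not_le.1 hm), zero_smul]
      exact zero_mem _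

end DualVector

section ColumnShear

variable {K V : Type*} [DivisionRing K] [AddCommGroup V] [Module K V]

structure IsColumnShear (n : ℕ) (A Ahat : ℤ → V) (a b : ℤ) (t : K) : Prop where
  le : a ≤ b
  lt : b < a + n
  apply_of_ne : ∀ j ∈ Ico a (a + n), j ≠ b → Ahat j = A j
  apply_self : Ahat b = A b + t • A (b + 1)

namespace IsColumnShear

variable {n : ℕ} {A Ahat : ℤ → V} {a b : ℤ} {t : K}

theorem of_intCast_ne (hAhat : ∀ j : ℤ, (j : ZMod n) ≠ (b : ZMod n) → Ahat j = A j)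
    (hb : Ahat b = A b + t • A (b + 1)) (hab : a ≤ b) (hba : b < a + n) :
    IsColumnShear n A Ahat a b t :=
  ⟨hab, hba, fun j hj hjb => hAhat j (intCast_ne_of_mem_Ico hj ⟨hab, hba⟩ hjb), hb⟩

theorem exists_sub_mul (hper : Function.Periodic A n) (hperhat : Function.Periodic Ahat n)
    (hAhat : ∀ j : ℤ, (j : ZMod n) ≠ (b : ZMod n) → Ahat j = A j)
    (hb : Ahat b = A b + t • A (b + 1)) (hn : 0 < n) (a : ℤ) :
    ∃ s : ℤ, IsColumnShear n A Ahat a (b - s * n) t := by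
  have hdiv := Int.emod_add_mul_ediv (b - a) n
  have h₁ := Int.emod_nonneg (b - a) (by omega : (n : ℤ) ≠ 0)
  have h₂ := Int.emod_lt_of_pos (b - a) (by omega : (0 : ℤ) < n)
  set s := (b - a) / n
  have hshift : ∀ {f : ℤ → V}, Function.Periodic f n → ∀ x, f (x - s * n) = f x :=
    fun hf x => by simpa using hf.sub_int_mul_eq (x := x) s
  refine ⟨s, of_intCast_ne (fun j hj => hAhat j (by simpa using hj)) ?_ (by linarith)
    (by linarith)⟩
  rw [hshift hperhat, hb, hshift hper, sub_add_eq_add_sub, hshift hper]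

theorem eqOn_of_eq_zero (h : IsColumnShear n A Ahat a b (0 : K)) :
    EqOn A Ahat (Ico a (a + n)) := fun j hj => by
  by_cases hjb : j = b
  · rw [hjb, h.apply_self, zero_smul, add_zero]
  · exact (h.apply_of_ne j hj hjb).symm

/-- `A b, A (b + 1)` and `Ahat b, Ahat (b + 1)` span the same plane. -/
theorem span_image_Ico_eq (h : IsColumnShear n A Ahat a b t) {r : ℤ} (hr : r ≤ a + n)
    (hrb : r ≠ b + 1) : span K (Ahat '' Ico a r) = span K (A '' Ico a r) := by
  rcases le_or_gt r b with hrb' | hrb'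
  · refine congrArg _ (image_congr fun j hj => h.apply_of_ne j ⟨hj.1, ?_⟩ ?_)
    · linarith [hj.2, h.lt]
    · exact (hj.2.trans_le hrb').ne
  have hb : b ∈ Ico a r := ⟨h.le, hrb'⟩
  have hb1 : b + 1 ∈ Ico a r := ⟨by linarith [h.le], by omega⟩
  have hAhat1 : Ahat (b + 1) = A (b + 1) := h.apply_of_ne _ ⟨hb1.1, by omega⟩ (by omega)
  apply le_antisymm <;> refine span_le.2 ?_ <;> rintro _ ⟨j, ⟨hj₁, hj₂⟩, rfl⟩
  · by_cases hjb : j = b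
    · rw [hjb, h.apply_self]
      exact add_mem (subset_span ⟨_, hb, rfl⟩) (smul_mem _ _ (subset_span ⟨_, hb1, rfl⟩))
    · rw [h.apply_of_ne j ⟨hj₁, by omega⟩ hjb]
      exact subset_span ⟨j, ⟨hj₁, hj₂⟩, rfl⟩
  · by_cases hjb : j = b
    · rw [hjb, show A b = Ahat b - t • Ahat (b + 1) by
        rw [h.apply_self, hAhat1, add_sub_cancel_right]]
      exact sub_mem (subset_span ⟨_, hb, rfl⟩) (smul_mem _ _ (subset_span ⟨_, hb1, rfl⟩))
    · rw [← h.apply_of_ne j ⟨hj₁, by omega⟩ hjb]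
      exact subset_span ⟨j, ⟨hj₁, hj₂⟩, rfl⟩

theorem mem_greedyBasis_iff (h : IsColumnShear n A Ahat a b t) {j : ℤ} (hjb : j ≠ b)
    (hjb1 : j ≠ b + 1) : j ∈ greedyBasis K n Ahat a ↔ j ∈ greedyBasis K n A a := by
  simp only [mem_greedyBasis]
  refine and_congr_right fun hj => ?_
  rw [h.apply_of_ne j hj hjb, h.span_image_Ico_eq hj.2.le hjb1]

theorem greedyBasis_subset (h : IsColumnShear n A Ahat a b t)
    (hb : b ∈ greedyBasis K n A a → b ∈ greedyBasis K n Ahat a)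
    (hb1 : b + 1 ∈ greedyBasis K n A a → b + 1 ∈ greedyBasis K n Ahat a) :
    greedyBasis K n A a ⊆ greedyBasis K n Ahat a := fun j hj => by
  by_cases hjb : j = b
  · exact hjb ▸ hb (hjb ▸ hj)
  by_cases hjb1 : j = b + 1
  · exact hjb1 ▸ hb1 (hjb1 ▸ hj)
  exact (h.mem_greedyBasis_iff hjb hjb1).2 hj

/-- The two greedy bases have the same size and agree off `{b, b + 1}`. -/
theorem pair_subset_greedyBasis (h : IsColumnShear n A Ahat a b t)
    (hb : b ∈ greedyBasis K n A a) (hb1 : b + 1 ∈ greedyBasis K n A a) :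
    {b, b + 1} ⊆ greedyBasis K n Ahat a := by
  have hb1n : b + 1 < a + n := (mem_greedyBasis.1 hb1).1.2
  refine Finset.subset_of_sdiff_eq_of_card_le
    (Finset.insert_subset hb (Finset.singleton_subset_iff.2 hb1)) ?_ ?_
  · ext j
    simp only [Finset.mem_sdiff, Finset.mem_insert, Finset.mem_singleton, not_or]
    exact ⟨fun ⟨hj, hjb, hjb1⟩ => ⟨(h.mem_greedyBasis_iff hjb hjb1).2 hj, hjb, hjb1⟩,
      fun ⟨hj, hjb, hjb1⟩ => ⟨(h.mem_greedyBasis_iff hjb hjb1).1 hj, hjb, hjb1⟩⟩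
  · rw [card_greedyBasis, card_greedyBasis, h.span_image_Ico_eq le_rfl (by omega)]

theorem mem_greedyBasis_self (h : IsColumnShear n A Ahat a b t) (ht : t ≠ 0)
    (hb1 : A (b + 1) ∉ span K (A '' Ico a (b + 1))) : b ∈ greedyBasis K n Ahat a := by
  refine mem_greedyBasis.2 ⟨⟨h.le, h.lt⟩, fun hmem => hb1 ?_⟩
  rw [h.span_image_Ico_eq h.lt.le (by omega), h.apply_self] at hmem
  have hAb : A b ∈ span K (A '' Ico a (b + 1)) := subset_span ⟨b, ⟨h.le, by omega⟩, rfl⟩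
  have := sub_mem (span_mono (image_mono (Ico_subset_Ico_right (by omega))) hmem) hAb
  rwa [add_sub_cancel_left, smul_mem_iff _ ht] at this

end IsColumnShear

end ColumnShear

section Perturbation

variable {k n : ℕ} {A Ahat T That : ℤ → Fin k → ℂ} {π : ℤ → ℤ} {a b : ℤ} {t : ℂ}

namespace IsColumnShear

theorem twist_eq (h : IsColumnShear n A Ahat a b t) (hT : IsRightTwist k n A T)
    (hThat : IsRightTwist k n Ahat That) (hA : span ℂ (A '' Ico a (a + n)) = ⊤)
    (hAhat : span ℂ (Ahat '' Ico a (a + n)) = ⊤)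
    (hsub : greedyBasis ℂ n A a ⊆ greedyBasis ℂ n Ahat a)
    (hb : b ∈ greedyBasis ℂ n A a → b + 1 ∈ greedyBasis ℂ n A a) : That a = T a := by
  refine hT.eq_of_isDualVector hA fun j hj => ?_
  by_cases hjb : j = b
  · rw [hjb] at hj ⊢
    have hb1 := hb hj
    have h1 := hThat.isDualVector hAhat _ (hsub hb1)
    rw [h.apply_of_ne _ (mem_greedyBasis.1 hb1).1 (by omega),
      if_neg (by have := h.le; omega)] at h1
    have h2 := hThat.isDualVector hAhat _ (hsub hj)
    rwa [h.apply_self, bil_add_right, bil_smul_right, h1, mul_zero, add_zero] at h2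
  · rw [← h.apply_of_ne j (mem_greedyBasis.1 hj).1 hjb]
    exact hThat.isDualVector hAhat j (hsub hj)

theorem bil_twist_apply (h : IsColumnShear n A Ahat a b t) (hThat : IsRightTwist k n Ahat That)
    (hAhat : span ℂ (Ahat '' Ico a (a + n)) = ⊤) {j : ℤ} (hj : j ∈ greedyBasis ℂ n A a)
    (hjb : j ≠ b) (hjb1 : j ≠ b + 1) : bil k (That a) (A j) = if j = a then 1 else 0 := by
  rw [← h.apply_of_ne j (mem_greedyBasis.1 hj).1 hjb]
  exact hThat.isDualVector hAhat j ((h.mem_greedyBasis_iff hjb hjb1).2 hj)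

/-- If `b < π a`, then `A b` is a combination of earlier greedy columns other than `A a`, all
orthogonal to `That a`, so the equation of `That a` at `b` reduces to
`t * bil k (That a) (A (b + 1)) = 0`. -/
theorem bil_twist_apply_succ_eq_zero (h : IsColumnShear n A Ahat a b t) (ht : t ≠ 0)
    (hπ : IsBAP k n A π) (hThat : IsRightTwist k n Ahat That)
    (hAhat : span ℂ (Ahat '' Ico a (a + n)) = ⊤) (hbG : b ∉ greedyBasis ℂ n A a)
    (hbGhat : b ∈ greedyBasis ℂ n Ahat a) (hbπ : b < π a) :
    bil k (That a) (A (b + 1)) = 0 := by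
  have hAb : A b ∈ span ℂ (A '' Ico a b) := by
    by_contra hnot
    exact hbG (mem_greedyBasis.2 ⟨⟨h.le, h.lt⟩, hnot⟩)
  have hab : a < b := by
    refine lt_of_le_of_ne h.le fun hab => hπ.notMem_span_Ico (lt_add_one a) (by omega) ?_
    rw [← hab, Ico_self, image_empty, span_empty, mem_bot] at hAb
    rw [hAb]
    exact zero_mem _
  set F := ((greedyBasis ℂ n A a).filter (· < b)).erase a
  have hAbF : A b ∈ span ℂ (A '' F) := by
    refine hπ.mem_span_of_mem_span_insert hab hbπ (fun j hj => ?_) ?_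
    · simp only [F, Finset.coe_erase, Finset.coe_filter, mem_sdiff, mem_ofPred_eq,
        mem_singleton_iff] at hj
      exact ⟨lt_of_le_of_ne (mem_greedyBasis.1 hj.1.1).1.1 (Ne.symm hj.2), hj.1.2⟩
    · rw [← span_greedyBasis_filter_lt h.le h.lt.le] at hAb
      refine span_mono ?_ hAb
      rw [← image_insert_eq, ← Finset.coe_insert]
      exact image_mono (Finset.coe_subset.2 (Finset.insert_erase_subset _ _))
  have hzero : bil k (That a) (A b) = 0 := by
    refine bil_eq_zero_of_mem_span ?_ hAbF
    rintro _ ⟨j, hj, rfl⟩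
    simp only [F, Finset.coe_erase, Finset.coe_filter, mem_sdiff, mem_ofPred_eq,
      mem_singleton_iff] at hj
    obtain ⟨⟨hjG, hjb⟩, hja⟩ := hj
    rw [h.bil_twist_apply hThat hAhat hjG hjb.ne (by omega), if_neg hja]
  have := hThat.isDualVector hAhat b hbGhat
  rw [h.apply_self, bil_add_right, bil_smul_right, hzero, zero_add, if_neg hab.ne'] at this
  exact (mul_eq_zero.1 this).resolve_left ht

/-- When `b + 1` is traded for `b`, `That a - T a` is orthogonal to all of the greedy basis of `A`
but `A (b + 1)`, hence a multiple of the dual vector of `A (b + 1)`. -/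
theorem twist_sub_mem_span_of_exchange (h : IsColumnShear n A Ahat a b t) (ht : t ≠ 0)
    (hπ : IsBAP k n A π) (hT : IsRightTwist k n A T) (hThat : IsRightTwist k n Ahat That)
    (hA : ∀ x, span ℂ (A '' Ico x (x + n)) = ⊤) (hAhat : span ℂ (Ahat '' Ico a (a + n)) = ⊤)
    (hbG : b ∉ greedyBasis ℂ n A a) (hb1G : b + 1 ∈ greedyBasis ℂ n A a)
    (hbGhat : b ∈ greedyBasis ℂ n Ahat a) :
    That a - T a ∈ span ℂ (T '' {p | p < a ∧ a ≤ π a ∧ π a < π p}) := by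
  have hb1a : b + 1 ≠ a := by have := h.le; omega
  have hTa := hT.isDualVector (hA a)
  have hperp : ∀ j ∈ greedyBasis ℂ n A a, j ≠ b + 1 → bil k (That a - T a) (A j) = 0 :=
    fun j hj hjb1 => by
      rw [bil_sub_left, h.bil_twist_apply hThat hAhat hj (fun hjb => hbG (hjb ▸ hj)) hjb1,
        hTa j hj, sub_self]
  set κ := bil k (That a - T a) (A (b + 1))
  by_cases hκ : κ = 0
  · have : That a - T a = 0 := by
      refine eq_zero_of_bil_eq_zero (span_image_greedyBasis.trans (hA a)) ?_
      rintro _ ⟨j, hj, rfl⟩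
      by_cases hjb1 : j = b + 1
      · rw [hjb1]
        exact hκ
      · exact hperp j hj hjb1
    rw [this]
    exact zero_mem _
  have hπa : π a ≤ b := by
    by_contra! hlt
    apply hκ
    change bil k (That a - T a) (A (b + 1)) = 0
    rw [bil_sub_left, h.bil_twist_apply_succ_eq_zero ht hπ hThat hAhat hbG hbGhat hlt, hTa _ hb1G,
      if_neg hb1a, sub_zero]
  have hdual : IsDualVector A (greedyBasis ℂ n A a) (b + 1) (κ⁻¹ • (That a - T a)) := by
    intro j hj
    rw [bil_smul_left]
    by_cases hjb1 : j = b + 1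
    · rw [hjb1, if_pos rfl, inv_mul_cancel₀ hκ]
    · rw [hperp j hj hjb1, if_neg hjb1, mul_zero]
  have hmem := hT.mem_span_of_isDualVector hA hπ (by have := h.le; omega) hdual
  have hsub : {q | q < a ∧ b + 1 ≤ π q} ⊆ {p | p < a ∧ a ≤ π a ∧ π a < π p} :=
    fun q hq => ⟨hq.1, (hπ a).1, by linarith [hq.2]⟩
  rw [← smul_inv_smul₀ hκ (That a - T a)]
  exact smul_mem _ _ (span_mono (image_mono hsub) hmem)

theorem twist_eq_of_mem_span (h : IsColumnShear n A Ahat a b t) (hT : IsRightTwist k n A T)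
    (hThat : IsRightTwist k n Ahat That) (hA : span ℂ (A '' Ico a (a + n)) = ⊤)
    (hAhat : span ℂ (Ahat '' Ico a (a + n)) = ⊤) (hAb : A b ∈ span ℂ (A '' Ico a b))
    (hAb1 : A (b + 1) ∈ span ℂ (A '' Ico a b)) : That a = T a := by
  have hbG : b ∉ greedyBasis ℂ n A a := fun hb => (mem_greedyBasis.1 hb).2 hAb
  have hb1G : b + 1 ∉ greedyBasis ℂ n A a := fun hb => (mem_greedyBasis.1 hb).2
    (span_mono (image_mono (Ico_subset_Ico_right (by omega))) hAb1)
  exact h.twist_eq hT hThat hA hAhat (h.greedyBasis_subset (absurd · hbG) (absurd · hb1G))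
    (absurd · hbG)

theorem twist_sub_mem_span_of_notMem_span (h : IsColumnShear n A Ahat a b t) (ht : t ≠ 0)
    (hπ : IsBAP k n A π) (hT : IsRightTwist k n A T) (hThat : IsRightTwist k n Ahat That)
    (hA : ∀ x, span ℂ (A '' Ico x (x + n)) = ⊤) (hAhat : span ℂ (Ahat '' Ico a (a + n)) = ⊤)
    (hb1n : b + 1 < a + n) (hb1 : A (b + 1) ∉ span ℂ (A '' Ico a (b + 1))) :
    That a - T a ∈ span ℂ (T '' {p | p < a ∧ a ≤ π a ∧ π a < π p}) := by
  have hb1G : b + 1 ∈ greedyBasis ℂ n A a :=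
    mem_greedyBasis.2 ⟨⟨by linarith [h.le], hb1n⟩, hb1⟩
  by_cases hbG : b ∈ greedyBasis ℂ n A a
  · have hpair := h.pair_subset_greedyBasis hbG hb1G
    rw [h.twist_eq hT hThat (hA a) hAhat (h.greedyBasis_subset (fun _ => hpair (by simp))
      (fun _ => hpair (by simp))) (fun _ => hb1G), sub_self]
    exact zero_mem _
  · exact h.twist_sub_mem_span_of_exchange ht hπ hT hThat hA hAhat hbG hb1G
      (h.mem_greedyBasis_self ht hb1)

end IsColumnShear

theorem twist_sub_mem_span_of_bridge (hper : ColPeriodic k n A) (hrank : FullRank k A)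
    (hAhat : span ℂ (Ahat '' Ico a (a + n)) = ⊤) (hπ : IsBAP k n A π)
    (hT : IsRightTwist k n A T) (hThat : IsRightTwist k n Ahat That) {c d : ℤ}
    (hc : π c = b) (hd : π d = b + 1) (hdc : d < c) (hcb : c ≤ b)
    (h : IsColumnShear n A Ahat a b t) :
    That a - T a ∈ span ℂ (T '' {p | p < a ∧ a ≤ π a ∧ π a < π p}) := by
  have hA := span_image_Ico_eq_top hper hrank (by have := h.le; have := h.lt; omega)
  by_cases ht : t = 0
  · subst ht
    rw [hT.eq_of_eqOn hThat (hA a) hAhat h.eqOn_of_eq_zero, sub_self]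
    exact zero_mem _
  rcases le_or_gt a d with had | hda
  · -- `A b` and `A (b + 1)` both lie in the span of `A d, …, A (b - 1)`
    have hAbd : A b ∈ span ℂ (A '' Ico d b) :=
      span_mono (image_mono (Ico_subset_Ico_left hdc.le)) (hc ▸ hπ.apply_mem_span c)
    have hAb1d : A (b + 1) ∈ span ℂ (A '' Ico d b) := by
      have := hd ▸ hπ.apply_mem_span d
      rwa [← insert_Ico_right_eq_Ico_add_one (by omega), image_insert_eq,
        span_insert_eq_span hAbd] at this
    have hW : span ℂ (A '' Ico d b) ≤ span ℂ (A '' Ico a b) :=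
      span_mono (image_mono (Ico_subset_Ico_left had))
    rw [h.twist_eq_of_mem_span hT hThat (hA a) hAhat (hW hAbd) (hW hAb1d), sub_self]
    exact zero_mem _
  · -- `π d = b + 1` keeps `A (b + 1)` out of the span of `A (d + 1), …, A b`
    refine h.twist_sub_mem_span_of_notMem_span ht hπ hT hThat hA hAhat
      (by linarith [(hπ d).2.1]) fun hmem => hπ.apply_notMem_span (a := d) (by omega) ?_
    rw [hd]
    exact span_mono (image_mono (Ico_subset_Ico_left (by omega))) hmem

end Perturbation

theorem bridge_perturbation_general
    (k n : ℕ)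
    (A : ℤ → Fin k → ℂ) (hper : ColPeriodic k n A) (hrank : FullRank k A)
    (π : ℤ → ℤ) (hπ : IsBAP k n A π)
    (b : ℤ) (t : ℂ) (c d : ℤ)
    (hc : π c = b) (hd : π d = b + 1) (hdc : d < c) (hcb : c ≤ b)
    (Ahat : ℤ → Fin k → ℂ) (hhatper : ColPeriodic k n Ahat)
    (hhat : ∀ a : ℤ, (a : ZMod n) ≠ (b : ZMod n) → Ahat a = A a)
    (hhatb : Ahat b = A b + t • A (b + 1))
    (T That : ℤ → Fin k → ℂ)
    (hT : IsRightTwist k n A T) (hThat : IsRightTwist k n Ahat That) :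
    FullRank k Ahat ∧
    ∀ a : ℤ, That a - T a ∈
      Submodule.span ℂ (T '' {p : ℤ | p < a ∧ a ≤ π a ∧ π a < π p}) := by
  have hn : 2 ≤ n := by have := (hπ d).2.1; omega
  have hrankhat : FullRank k Ahat := by
    have := (IsColumnShear.of_intCast_ne (a := b) hhat hhatb le_rfl (by omega)).span_image_Ico_eq
      le_rfl (by omega)
    rw [FullRank, eq_top_iff, ← span_image_Ico_eq_top hper hrank (by omega) b, ← this]
    exact span_mono (image_subset_range _ _)
  refine ⟨hrankhat, fun a => ?_⟩
  obtain ⟨s, hs⟩ := IsColumnShear.exists_sub_mul hper hhatper hhat hhatb (by omega) a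
  exact twist_sub_mem_span_of_bridge hper hrank
    (span_image_Ico_eq_top hhatper hrankhat (by omega) a) hπ hT hThat
    (c := c - s * n) (d := d - s * n) (by rw [hπ.apply_sub_int_mul hper c s, hc])
    (by rw [hπ.apply_sub_int_mul hper d s, hd]; ring) (by omega) (by omega) hs

/-- bridge perturbation lemma: let `b ∈ ℤ`, `t ∈ ℂ`, and
suppose there are `c, d` with `π c = b`, `π d = b + 1` and `d < c ≤ b`.  Let
`Â` be the (periodic) matrix with `Â a = A a` for `a ≢ b (mod n)` and
`Â b = A b + t • A (b+1)`.  Then `Â` has rank `k` and, for every `a`, the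
difference `τ→(Â) a − τ→(A) a` lies in `span{τ→(A) p : a ⇒_π p}`. -/
theorem bridge_perturbation
    (k n : ℕ) (hk : 1 ≤ k) (hkn : k ≤ n)
    (A : ℤ → Fin k → ℂ) (hper : ColPeriodic k n A) (hrank : FullRank k A)
    (π : ℤ → ℤ) (hπ : IsBAP k n A π)
    (b : ℤ) (t : ℂ) (c d : ℤ)
    (hc : π c = b) (hd : π d = b + 1) (hdc : d < c) (hcb : c ≤ b)
    (Ahat : ℤ → Fin k → ℂ) (hhatper : ColPeriodic k n Ahat)
    (hhat : ∀ a : ℤ, (a : ZMod n) ≠ (b : ZMod n) → Ahat a = A a)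
    (hhatb : Ahat b = A b + t • A (b + 1))
    (T That : ℤ → Fin k → ℂ)
    (hT : IsRightTwist k n A T) (hThat : IsRightTwist k n Ahat That) :
    FullRank k Ahat ∧
    ∀ a : ℤ, That a - T a ∈
      Submodule.span ℂ (T '' {p : ℤ | p < a ∧ a ≤ π a ∧ π a < π p}) :=
  bridge_perturbation_general k n A hper hrank π hπ b t c d hc hd hdc hcb Ahat hhatper hhat hhatb T
    That hT hThat
end

section
/- Double twist in the 2×n case: the matrix τ→(A) again satisfies det(τ→(A)_i, τ→(A)_{i+1}) ≠ 0 for all i (so its right twist is defined by the same recipe), and the double twist satisfies τ→(τ→(A))_i = −( det(A_i, A_{i+1}) / det(A_{i+1}, A_{i+2}) ) · A_{i+2} for every i ∈ ℤ. -/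
/-- The determinant `det(x, y)` of the `2×2` matrix with columns `x, y`. -/
noncomputable def det2 (x y : Fin 2 → ℂ) : ℂ := x 0 * y 1 - x 1 * y 0

/-- The standard symmetric bilinear form `⟨x|y⟩ = x₁y₁ + x₂y₂` on `ℂ²`. -/
noncomputable def bil2 (x y : Fin 2 → ℂ) : ℂ := x 0 * y 0 + x 1 * y 1

/-- `T` is the right twist of the `2×n` matrix `A` (with all cyclically
consecutive `2×2` minors nonzero, so that its `i`-minimal column basis is
`{i, i+1}`): the `i`-th column of `T` is the unique `v ∈ ℂ²` with
`⟨v|A i⟩ = 1` and `⟨v|A (i+1)⟩ = 0`. -/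
def IsTwist2 (A T : ℤ → Fin 2 → ℂ) : Prop :=
  ∀ i : ℤ, bil2 (T i) (A i) = 1 ∧ bil2 (T i) (A (i + 1)) = 0

/-! The twist is a rotation by a quarter turn followed by a rescaling: `⟨rot2 b|x⟩ = det(x, b)`,
so `τ→(A) i = det(A i, A (i+1))⁻¹ • rot2 (A (i+1))`. Since `rot2` preserves `det2` and squares
to `-1`, applying this formula twice gives the double twist. -/

noncomputable def rot2 (b : Fin 2 → ℂ) : Fin 2 → ℂ := ![b 1, -b 0]

lemma bil2_rot2 (b x : Fin 2 → ℂ) : bil2 (rot2 b) x = det2 x b := by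
  simp only [bil2, det2, rot2, Matrix.cons_val_zero, Matrix.cons_val_one]
  ring

lemma det2_rot2 (x y : Fin 2 → ℂ) : det2 (rot2 x) (rot2 y) = det2 x y := by
  simp only [det2, rot2, Matrix.cons_val_zero, Matrix.cons_val_one]
  ring

lemma rot2_rot2 (x : Fin 2 → ℂ) : rot2 (rot2 x) = -x := by
  ext k
  fin_cases k <;> simp [rot2]

lemma rot2_smul (c : ℂ) (x : Fin 2 → ℂ) : rot2 (c • x) = c • rot2 x := by
  ext k
  fin_cases k <;> simp [rot2]

lemma det2_smul_smul (c d : ℂ) (x y : Fin 2 → ℂ) :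
    det2 (c • x) (d • y) = c * d * det2 x y := by
  simp only [det2, Pi.smul_apply, smul_eq_mul]
  ring

lemma eq_inv_det2_smul_rot2 {a b v : Fin 2 → ℂ} (hab : det2 a b ≠ 0)
    (hva : bil2 v a = 1) (hvb : bil2 v b = 0) : v = (det2 a b)⁻¹ • rot2 b := by
  rw [eq_inv_smul_iff₀ hab]
  ext k
  fin_cases k <;>
    simp only [bil2, det2, rot2, Pi.smul_apply, smul_eq_mul, Fin.zero_eta, Fin.mk_one,
      Matrix.cons_val_zero, Matrix.cons_val_one] at hva hvb ⊢
  · linear_combination b 1 * hva - a 1 * hvb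
  · linear_combination -(b 0) * hva + a 0 * hvb

namespace IsTwist2

variable {A T : ℤ → Fin 2 → ℂ}

lemma eq_smul_rot2 (hT : IsTwist2 A T) (hA : ∀ i, det2 (A i) (A (i + 1)) ≠ 0) (i : ℤ) :
    T i = (det2 (A i) (A (i + 1)))⁻¹ • rot2 (A (i + 1)) :=
  eq_inv_det2_smul_rot2 (hA i) (hT i).1 (hT i).2

lemma det2_eq_inv (hT : IsTwist2 A T) (hA : ∀ i, det2 (A i) (A (i + 1)) ≠ 0) (i : ℤ) :
    det2 (T i) (T (i + 1)) = (det2 (A i) (A (i + 1)))⁻¹ := by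
  have hA' := hA (i + 1)
  rw [hT.eq_smul_rot2 hA, hT.eq_smul_rot2 hA, det2_smul_smul, det2_rot2]
  field_simp

end IsTwist2

theorem twist2_double_general
    (A : ℤ → Fin 2 → ℂ)
    (hminor : ∀ i : ℤ, det2 (A i) (A (i + 1)) ≠ 0)
    (T : ℤ → Fin 2 → ℂ) (hT : IsTwist2 A T) :
    (∀ i : ℤ, det2 (T i) (T (i + 1)) ≠ 0) ∧
    ∀ S : ℤ → Fin 2 → ℂ, IsTwist2 T S →
      ∀ i : ℤ,
        S i = (-(det2 (A i) (A (i + 1)) / det2 (A (i + 1)) (A (i + 2)))) •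
          A (i + 2) := by
  have hTminor : ∀ i, det2 (T i) (T (i + 1)) ≠ 0 := fun i => by
    rw [hT.det2_eq_inv hminor]
    exact inv_ne_zero (hminor i)
  refine ⟨hTminor, fun S hS i => ?_⟩
  have hi : i + 1 + 1 = i + 2 := by ring
  rw [hS.eq_smul_rot2 hTminor, hT.det2_eq_inv hminor, hT.eq_smul_rot2 hminor (i + 1), hi,
    rot2_smul, rot2_rot2, inv_inv, smul_smul, smul_neg, ← neg_smul, div_eq_mul_inv]

/-- double twist in the `2×n` case: `τ→(A)` again has all
cyclically consecutive `2×2` minors nonzero (so its right twist is defined by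
the same recipe), and the double twist satisfies
`τ→(τ→(A)) i = -(det(A i, A (i+1)) / det(A (i+1), A (i+2))) • A (i+2)`. -/
theorem twist2_double
    (n : ℕ) (hn : 2 ≤ n)
    (A : ℤ → Fin 2 → ℂ) (hper : ∀ a : ℤ, A (a + (n : ℤ)) = A a)
    (hminor : ∀ i : ℤ, det2 (A i) (A (i + 1)) ≠ 0)
    (T : ℤ → Fin 2 → ℂ) (hT : IsTwist2 A T) :
    (∀ i : ℤ, det2 (T i) (T (i + 1)) ≠ 0) ∧
    ∀ S : ℤ → Fin 2 → ℂ, IsTwist2 T S →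
      ∀ i : ℤ,
        S i = (-(det2 (A i) (A (i + 1)) / det2 (A (i + 1)) (A (i + 2)))) •
          A (i + 2) :=
  twist2_double_general A hminor T hT
end
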